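/- arXiv:2310.06733 — 3 statements merged into one kernel-verified Lean document; each statement's English description precedes it below -/
import Mathlib

section
/- Let $\eta>0$, and let $(r_k)$, $(\theta_k)$, $(v_k)$ be sequences with $r_{k+1} = r_k/(1+2\eta\|v_k\|^2)$ and $\theta_{k+1} = \theta_k - 2\eta r_{k+1} v_k$, with $r_0 \geq 0$. Then for all $k$, $r_{k+1}^2 = r_k^2 - (r_{k+1}-r_k)^2 - \frac{1}{\eta}\|\theta_{k+1}-\theta_k\|^2$. -/
theorem aepg_energy_identity {n : ℕ} (η : ℝ) (hη : 0 < η)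
    (r : ℕ → ℝ) (θ v : ℕ → EuclideanSpace ℝ (Fin n))
    (hr0 : 0 ≤ r 0)
    (hr : ∀ k, r (k + 1) = r k / (1 + 2 * η * ‖v k‖ ^ 2))
    (hθ : ∀ k, θ (k + 1) = θ k - (2 * η * r (k + 1)) • v k) :
    ∀ k, (r (k + 1)) ^ 2 =
      (r k) ^ 2 - (r (k + 1) - r k) ^ 2 - (1 / η) * ‖θ (k + 1) - θ k‖ ^ 2 := by
  intro k
  have hd : (0:ℝ) < 1 + 2 * η * ‖v k‖ ^ 2 := by positivity
  have h1 : r (k + 1) * (1 + 2 * η * ‖v k‖ ^ 2) = r k := by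
    rw [hr k]; field_simp
  have h2 : ‖θ (k + 1) - θ k‖ ^ 2 = (2 * η * r (k + 1)) ^ 2 * ‖v k‖ ^ 2 := by
    rw [hθ k]
    simp [norm_smul, mul_pow, sq_abs]
  have hb : r k = r (k + 1) + r (k + 1) * (2 * η * ‖v k‖ ^ 2) := by
    linear_combination -h1
  rw [h2, hb]
  have hη' : η ≠ 0 := ne_of_gt hη
  field_simp
  ring
end

section
/- Let $\eta>0$ and $(r_k)$, $(\theta_k)$, $(v_k)$ satisfy the AEPG updates $r_{k+1} = r_k/(1+2\eta\|v_k\|^2)$ and $\theta_{k+1} = \theta_k - 2\eta r_{k+1} v_k$ with $r_0 \geq 0$. Then $\sum_{k=0}^{\infty} \|\theta_{k+1}-\theta_k\|^2 \leq \eta r_0^2$, and consequently $\|\theta_{k+1}-\theta_k\| \to 0$ as $k \to \infty$. -/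
theorem aepg_step_square_summable {n : ℕ} (η : ℝ) (hη : 0 < η)
    (r : ℕ → ℝ) (θ v : ℕ → EuclideanSpace ℝ (Fin n))
    (hr0 : 0 ≤ r 0)
    (hr : ∀ k, r (k + 1) = r k / (1 + 2 * η * ‖v k‖ ^ 2))
    (hθ : ∀ k, θ (k + 1) = θ k - (2 * η * r (k + 1)) • v k) :
    (∑' k : ℕ, ‖θ (k + 1) - θ k‖ ^ 2) ≤ η * (r 0) ^ 2 ∧
      Filter.Tendsto (fun k => ‖θ (k + 1) - θ k‖) Filter.atTop (nhds 0) := by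
  have hden : ∀ k, (0:ℝ) < 1 + 2 * η * ‖v k‖ ^ 2 := by
    intro k
    nlinarith [sq_nonneg ‖v k‖, norm_nonneg (v k)]
  have hrpos : ∀ k, 0 ≤ r k := by
    intro k
    induction k with
    | zero => exact hr0
    | succ k ih => rw [hr k]; exact div_nonneg ih (hden k).le
  have hmul : ∀ k, r k = r (k + 1) * (1 + 2 * η * ‖v k‖ ^ 2) := by
    intro k
    rw [hr k, div_mul_cancel₀ _ (hden k).ne']
  have key : ∀ k, ‖θ (k + 1) - θ k‖ ^ 2 ≤ η * (r k ^ 2 - r (k + 1) ^ 2) := by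
    intro k
    have h1 : θ (k + 1) - θ k = -((2 * η * r (k + 1)) • v k) := by
      rw [hθ k]; abel
    have h2 : ‖θ (k + 1) - θ k‖ ^ 2 = (2 * η * r (k + 1)) ^ 2 * ‖v k‖ ^ 2 := by
      rw [h1, norm_neg, norm_smul, mul_pow, Real.norm_eq_abs, sq_abs]
    rw [h2, hmul k]
    nlinarith [mul_nonneg (mul_nonneg (mul_nonneg hη.le hη.le) hη.le)
      (sq_nonneg (r (k + 1) * ‖v k‖ ^ 2))]
  have hnonneg : ∀ k, (0:ℝ) ≤ ‖θ (k + 1) - θ k‖ ^ 2 := fun k => sq_nonneg _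
  have hpartial : ∀ N, ∑ k ∈ Finset.range N, ‖θ (k + 1) - θ k‖ ^ 2 ≤ η * r 0 ^ 2 := by
    intro N
    calc ∑ k ∈ Finset.range N, ‖θ (k + 1) - θ k‖ ^ 2
        ≤ ∑ k ∈ Finset.range N, η * (r k ^ 2 - r (k + 1) ^ 2) :=
          Finset.sum_le_sum fun k _ => key k
      _ = η * (r 0 ^ 2 - r N ^ 2) := by
          rw [← Finset.mul_sum, Finset.sum_range_sub' (fun k => r k ^ 2)]
      _ ≤ η * r 0 ^ 2 := by nlinarith [sq_nonneg (r N)]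
  have hsummable : Summable (fun k => ‖θ (k + 1) - θ k‖ ^ 2) :=
    summable_of_sum_range_le hnonneg hpartial
  constructor
  · exact Summable.tsum_le_of_sum_range_le hsummable hpartial
  · have h0 := hsummable.tendsto_atTop_zero
    have h1 := (Real.continuous_sqrt.tendsto 0).comp h0
    have heq : ((fun x => Real.sqrt x) ∘ fun k => ‖θ (k + 1) - θ k‖ ^ 2)
        = fun k => ‖θ (k + 1) - θ k‖ :=
      funext fun k => Real.sqrt_sq (norm_nonneg _)
    rw [heq] at h1
    simpa using h1
end

section
/- Let $a, b \in \mathbb{R}$ with $ab \neq 0$, $\alpha \geq \beta > 0$, $L(\theta) = \frac{1}{2}(\beta\theta_1^2 + \alpha\theta_2^2)$, $P = \frac{1}{a^2+b^2}\begin{pmatrix} b^2 & -ab \\ -ab & a^2\end{pmatrix}$ the orthogonal projection onto $\ker(a,b)$, and $\theta^* = \left(\frac{a\alpha}{a^2\alpha+b^2\beta}, \frac{b\beta}{a^2\alpha+b^2\beta}\right)$. Then for every $\theta$ with $a\theta_1 + b\theta_2 = 1$, the projected PL condition $\frac{1}{2}\|P^\top \nabla L(\theta)\|^2 \geq \mu\,(L(\theta)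 - L(\theta^*))$ holds with $\mu = \frac{a^2\alpha + b^2\beta}{a^2 + b^2}$. -/
open Matrix

theorem projected_pl_condition_example (a b α β : ℝ)
    (hab : a * b ≠ 0) (hβ : 0 < β) (hαβ : β ≤ α)
    (P : Matrix (Fin 2) (Fin 2) ℝ)
    (hP : P = (a ^ 2 + b ^ 2)⁻¹ • Matrix.of ![![b ^ 2, -(a * b)], ![-(a * b), a ^ 2]])
    (θstar : ℝ × ℝ)
    (hθstar : θstar = (a * α / (a ^ 2 * α + b ^ 2 * β),
                       b * β / (a ^ 2 * α + b ^ 2 * β))) :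
    ∀ θ : ℝ × ℝ, a * θ.1 + b * θ.2 = 1 →
      (1 / 2) * ((Pᵀ.mulVec ![β * θ.1, α * θ.2]) ⬝ᵥ (Pᵀ.mulVec ![β * θ.1, α * θ.2])) ≥
        ((a ^ 2 * α + b ^ 2 * β) / (a ^ 2 + b ^ 2)) *
          ((1 / 2) * (β * θ.1 ^ 2 + α * θ.2 ^ 2) -
           (1 / 2) * (β * θstar.1 ^ 2 + α * θstar.2 ^ 2)) := by
  have ha : a ≠ 0 := left_ne_zero_of_mul hab
  have hb : b ≠ 0 := right_ne_zero_of_mul hab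
  have hs : a ^ 2 + b ^ 2 ≠ 0 := by positivity
  have hD : a ^ 2 * α + b ^ 2 * β ≠ 0 := by nlinarith [sq_nonneg a, sq_nonneg b, sq_pos_of_ne_zero ha, sq_pos_of_ne_zero hb]
  rintro ⟨x, y⟩ hθ
  have hy : y = (1 - a * x) / b := by field_simp; linarith
  subst hy hP hθstar
  apply ge_of_eq
  simp [Matrix.mulVec, dotProduct, Fin.sum_univ_two, Matrix.transpose]
  field_simp
  ring
end
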